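/- arXiv:2602.10590 — 2 statements merged into one kernel-verified Lean document; each statement's English description precedes it below -/
import Mathlib

section
/- Let N be a positive integer, L > 0, and Δx = 1/N. Let w : ℤ/Nℤ → ℝ be a sequence satisfying w_{i+1} - w_i + L·Δx ≥ 0 for all i. Then for every i, |w_i - ⟨w⟩| ≤ 2L, where ⟨w⟩ = Σ_{j∈ℤ/Nℤ} Δx · w_j. -/
/-- Discrete Poincaré–Wirtinger-type estimate: if an `N`-periodic sequence `w`
satisfies `w (i+1) - w i + L * Δx ≥ 0` with `Δx = 1/N`, then `|w i - ⟨w⟩| ≤ 2L`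
for every `i`, where `⟨w⟩ = ∑ j, Δx * w j`. -/
theorem stmt_1 (N : ℕ) [NeZero N] (L : ℝ) (hL : 0 < L)
    (w : ZMod N → ℝ)
    (h : ∀ i : ZMod N, w (i + 1) - w i + L * (1 / N) ≥ 0) :
    ∀ i : ZMod N, |w i - ∑ j : ZMod N, (1 / N : ℝ) * w j| ≤ 2 * L := by
  intro i
  have hN : (0:ℝ) < N := by exact_mod_cast (NeZero.pos N)
  -- key estimate: going k steps forward, w decreases by at most k·L·Δx
  have key : ∀ (a : ZMod N) (k : ℕ), w a - w (a + k) ≤ k * (L * (1/N)) := by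
    intro a k
    induction k with
    | zero => simp
    | succ k ih =>
      have h2 := h (a + (k : ZMod N))
      have hcast : (a + ((k+1 : ℕ) : ZMod N)) = (a + (k : ZMod N)) + 1 := by
        push_cast; ring
      rw [hcast]
      push_cast
      linarith
  have pair : ∀ a b : ZMod N, w a - w b ≤ L := by
    intro a b
    have hk := key a (b - a).val
    rw [ZMod.natCast_val, ZMod.cast_id] at hk
    simp only [add_sub_cancel] at hk
    have hkle : ((b - a).val : ℝ) ≤ N := by
      exact_mod_cast (ZMod.val_lt (b - a)).le
    have hpos : 0 ≤ L * (1/N) := by positivity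
    have : ((b - a).val : ℝ) * (L * (1/N)) ≤ N * (L * (1/N)) := by
      exact mul_le_mul_of_nonneg_right hkle hpos
    have hNL : (N:ℝ) * (L * (1/N)) = L := by field_simp
    linarith
  have hcard : (Finset.univ : Finset (ZMod N)).card = N := by
    simp [ZMod.card]
  have hsum : ∀ c : ℝ, ∑ _j : ZMod N, (1/N : ℝ) * c = c := by
    intro c
    rw [Finset.sum_const, hcard, nsmul_eq_mul]
    field_simp
  set m := ∑ j : ZMod N, (1/N : ℝ) * w j with hm
  have h1 : w i - m ≤ L := by
    have heq : w i - m = ∑ j : ZMod N, (1/N : ℝ) * (w i - w j) := by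
      rw [hm]
      rw [show ∀ f g : ZMod N → ℝ, (∑ j, (1/N:ℝ) * (f j - g j))
          = ∑ j, (1/N:ℝ) * f j - ∑ j, (1/N:ℝ) * g j from fun f g => by
        rw [← Finset.sum_sub_distrib]; apply Finset.sum_congr rfl; intros; ring]
      rw [hsum (w i)]
    rw [heq]
    calc ∑ j : ZMod N, (1/N : ℝ) * (w i - w j)
        ≤ ∑ _j : ZMod N, (1/N : ℝ) * L := by
          apply Finset.sum_le_sum
          intro j _
          exact mul_le_mul_of_nonneg_left (pair i j) (by positivity)
      _ = L := hsum L
  have h2 : m - w i ≤ L := by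
    have heq : m - w i = ∑ j : ZMod N, (1/N : ℝ) * (w j - w i) := by
      rw [hm]
      rw [show ∀ f g : ZMod N → ℝ, (∑ j, (1/N:ℝ) * (f j - g j))
          = ∑ j, (1/N:ℝ) * f j - ∑ j, (1/N:ℝ) * g j from fun f g => by
        rw [← Finset.sum_sub_distrib]; apply Finset.sum_congr rfl; intros; ring]
      rw [hsum (w i)]
    rw [heq]
    calc ∑ j : ZMod N, (1/N : ℝ) * (w j - w i)
        ≤ ∑ _j : ZMod N, (1/N : ℝ) * L := by
          apply Finset.sum_le_sum
          intro j _
          exact mul_le_mul_of_nonneg_left (pair j i) (by positivity)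
      _ = L := hsum L
  rw [abs_le]
  constructor <;> linarith
end

section
/- Let N ≥ M ≥ 1 be integers. With c_{(p₁,p₂)}(𝒦) = p₁²p₂²/|p|⁴ (and 0 if p₁p₂=0), let σ_M be the Cesàro mean of 𝒦 and let the array σ̄_M be its sampling σ̄_{M,i,j} = σ_M(i/N, j/N). Then the DFT coefficients of σ̄_M satisfy, for (m₁,m₂) ∈ {0,…,N−1}²: c^d_{(m₁,m₂)}(σ̄_M) = Σ_{k₁,k₂=0}^{M-1} weighted aliased sums that reduce to c_{(m₁,m₂)}(𝒦) + c_{(m₁−N,m₂)}(𝒦) + c_{(m₁,m₂−N)}(𝒦) + c_{(m₁−N,m₂−N)}(𝒦) times the Cesàro weights; in particular c^d_{(m₁,m₂)}(σ̄_M) is real, nonnegative, and at most 4. -/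
open scoped Real

/-- Fourier coefficients of the singular kernel `𝒦`:
`c_p(𝒦) = p₁² p₂² / (p₁² + p₂²)²` (equal to `0` when `p₁ p₂ = 0`). -/
noncomputable def cK (m : ℤ × ℤ) : ℝ :=
  ((m.1 : ℝ) ^ 2 * (m.2 : ℝ) ^ 2) / (((m.1 : ℝ) ^ 2 + (m.2 : ℝ) ^ 2) ^ 2)

/-- Generalized Cesàro mean of order `M` of the Fourier series of `𝒦`. -/
noncomputable def sigmaM (M : ℕ) (x : ℝ × ℝ) : ℂ :=
  (1 / (M : ℂ) ^ 2) * ∑ n₁ ∈ Finset.range M, ∑ n₂ ∈ Finset.range M,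
    ∑ m₁ ∈ Finset.Icc (-(n₁ : ℤ)) (n₁ : ℤ), ∑ m₂ ∈ Finset.Icc (-(n₂ : ℤ)) (n₂ : ℤ),
      (cK (m₁, m₂) : ℂ) * Complex.exp (2 * π * Complex.I * (m₁ * x.1 + m₂ * x.2))

/-- One-dimensional Cesàro (Fejér) weight: `w_M(p) = max (1 − |p|/M) 0`. -/
noncomputable def fejerWeight (M : ℕ) (p : ℤ) : ℝ :=
  max (1 - (|p| : ℝ) / M) 0

/-- Two-dimensional discrete Fourier transform of an `N`-periodic array. -/
noncomputable def dft2 (N : ℕ) [NeZero N] (v : ZMod N × ZMod N → ℂ)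
    (m : ZMod N × ZMod N) : ℂ :=
  (1 / (N : ℂ) ^ 2) * ∑ n : ZMod N × ZMod N, v n *
    Complex.exp (-(2 * π * Complex.I *
      ((m.1.val * n.1.val + m.2.val * n.2.val : ℕ) : ℂ)) / N)

/- helper lemmas -/

lemma sum_zmod (N : ℕ) [NeZero N] (f : ℕ → ℂ) :
    ∑ n : ZMod N, f n.val = ∑ i ∈ Finset.range N, f i := by
  obtain ⟨n, rfl⟩ := Nat.exists_eq_succ_of_ne_zero (NeZero.ne N)
  rw [← Fin.sum_univ_eq_sum_range]
  rfl

lemma two_pi_I_ne : (2 * (π:ℂ) * Complex.I) ≠ 0 := by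
  simp [Real.pi_ne_zero, Complex.I_ne_zero]

lemma sum_range_exp (N : ℕ) [NeZero N] (c : ℤ) :
    ∑ i ∈ Finset.range N, Complex.exp (2 * π * Complex.I * c * i / N)
      = if (N : ℤ) ∣ c then (N : ℂ) else 0 := by
  have hN : (N : ℂ) ≠ 0 := Nat.cast_ne_zero.mpr (NeZero.ne N)
  have hz : ∀ i : ℕ, Complex.exp (2 * π * Complex.I * c * i / N)
      = Complex.exp (2 * π * Complex.I * c / N) ^ i := by
    intro i
    rw [← Complex.exp_nat_mul]
    ring_nf
  simp only [hz]
  by_cases h : (N : ℤ) ∣ c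
  · obtain ⟨t, rfl⟩ := h
    have : Complex.exp (2 * π * Complex.I * (N * t) / N) = 1 := by
      rw [Complex.exp_eq_one_iff]
      exact ⟨t, by field_simp⟩
    simp [this]
  · have hne : Complex.exp (2 * π * Complex.I * c / N) ≠ 1 := by
      rw [Ne, Complex.exp_eq_one_iff]
      rintro ⟨t, ht⟩
      apply h
      refine ⟨t, ?_⟩
      have h2 : (c : ℂ) = (N : ℂ) * t := by
        field_simp at ht
        exact mul_left_cancel₀ two_pi_I_ne (by linear_combination (2 * (π:ℂ) * Complex.I) * ht)
      exact_mod_cast h2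
    rw [geom_sum_eq hne]
    have hNpow : Complex.exp (2 * π * Complex.I * c / N) ^ N = 1 := by
      rw [← Complex.exp_nat_mul, Complex.exp_eq_one_iff]
      exact ⟨c, by field_simp⟩
    simp [hNpow, h]

lemma key1 (N k m : ℕ) [NeZero N] (hk : k < N) (hm : m < N) (g : ℤ → ℂ) :
    ∑ p ∈ Finset.Icc (-(k:ℤ)) (k:ℤ), g p * (if (N:ℤ) ∣ p - m then 1 else 0)
      = (if m ≤ k then (1:ℂ) else 0) * g m
        + (if N - m ≤ k then (1:ℂ) else 0) * g ((m:ℤ) - N) := by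
  have hN : (0:ℤ) < N := by exact_mod_cast (NeZero.ne N).bot_lt
  have hdvd : ∀ p ∈ Finset.Icc (-(k:ℤ)) (k:ℤ),
      ((N:ℤ) ∣ p - m ↔ p = m ∨ p = (m:ℤ) - N) := by
    intro p hp
    simp only [Finset.mem_Icc] at hp
    constructor
    · rintro ⟨t, ht⟩
      have h1 : t < 1 := by nlinarith [hp.1, hp.2]
      have h2 : -1 ≤ t := by nlinarith [hp.1, hp.2]
      interval_cases t <;> omega
    · rintro (rfl | rfl)
      · simp
      · exact ⟨-1, by ring⟩
  calc ∑ p ∈ Finset.Icc (-(k:ℤ)) (k:ℤ), g p * (if (N:ℤ) ∣ p - m then 1 else 0)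
      = ∑ p ∈ Finset.Icc (-(k:ℤ)) (k:ℤ),
          ((if p = (m:ℤ) then g p else 0) + (if p = (m:ℤ) - N then g p else 0)) := by
        refine Finset.sum_congr rfl fun p hp => ?_
        simp only [hdvd p hp]
        by_cases e1 : p = (m:ℤ) <;> by_cases e2 : p = (m:ℤ) - N <;>
          simp [e1, e2] <;> omega
    _ = (if (m:ℤ) ∈ Finset.Icc (-(k:ℤ)) (k:ℤ) then g m else 0)
        + (if (m:ℤ) - N ∈ Finset.Icc (-(k:ℤ)) (k:ℤ) then g ((m:ℤ) - N) else 0) := by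
        rw [Finset.sum_add_distrib, Finset.sum_ite_eq', Finset.sum_ite_eq']
    _ = _ := by
        simp only [Finset.mem_Icc]
        have e1 : (-(k:ℤ) ≤ (m:ℤ) ∧ (m:ℤ) ≤ k) ↔ m ≤ k := by omega
        have e2 : (-(k:ℤ) ≤ (m:ℤ) - N ∧ (m:ℤ) - N ≤ k) ↔ N - m ≤ k := by omega
        rw [if_congr e1 rfl rfl, if_congr e2 rfl rfl]
        by_cases c1 : m ≤ k <;> by_cases c2 : N - m ≤ k <;> simp [c1, c2]

lemma key2 (N : ℕ) [NeZero N] (k₁ k₂ m₁ m₂ : ℕ) (hk₁ : k₁ < N) (hk₂ : k₂ < N)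
    (h₁ : m₁ < N) (h₂ : m₂ < N) :
    ∑ p₁ ∈ Finset.Icc (-(k₁:ℤ)) (k₁:ℤ), ∑ p₂ ∈ Finset.Icc (-(k₂:ℤ)) (k₂:ℤ),
        (cK (p₁, p₂) : ℂ) * (if (N:ℤ) ∣ p₁ - m₁ then 1 else 0)
          * (if (N:ℤ) ∣ p₂ - m₂ then 1 else 0)
      = (if m₁ ≤ k₁ then (1:ℂ) else 0) * (if m₂ ≤ k₂ then (1:ℂ) else 0) * (cK (m₁, m₂) : ℂ)
      + (if N - m₁ ≤ k₁ then (1:ℂ) else 0) * (if m₂ ≤ k₂ then (1:ℂ) else 0) * (cK ((m₁:ℤ) - N, (m₂:ℤ)) : ℂ)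
      + (if m₁ ≤ k₁ then (1:ℂ) else 0) * (if N - m₂ ≤ k₂ then (1:ℂ) else 0) * (cK ((m₁:ℤ), (m₂:ℤ) - N) : ℂ)
      + (if N - m₁ ≤ k₁ then (1:ℂ) else 0) * (if N - m₂ ≤ k₂ then (1:ℂ) else 0) * (cK ((m₁:ℤ) - N, (m₂:ℤ) - N) : ℂ) := by
  have step1 : ∀ p₁ : ℤ,
      ∑ p₂ ∈ Finset.Icc (-(k₂:ℤ)) (k₂:ℤ),
          (cK (p₁, p₂) : ℂ) * (if (N:ℤ) ∣ p₁ - m₁ then 1 else 0)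
            * (if (N:ℤ) ∣ p₂ - m₂ then 1 else 0)
        = (if m₂ ≤ k₂ then (1:ℂ) else 0) * ((cK (p₁, (m₂:ℤ)) : ℂ) * (if (N:ℤ) ∣ p₁ - m₁ then 1 else 0))
          + (if N - m₂ ≤ k₂ then (1:ℂ) else 0) * ((cK (p₁, (m₂:ℤ) - N) : ℂ) * (if (N:ℤ) ∣ p₁ - m₁ then 1 else 0)) :=
    fun p₁ => key1 N k₂ m₂ hk₂ h₂
      (fun p₂ => (cK (p₁, p₂) : ℂ) * (if (N:ℤ) ∣ p₁ - m₁ then 1 else 0))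
  rw [Finset.sum_congr rfl fun p₁ _ => step1 p₁, Finset.sum_add_distrib]
  have step2 : ∀ (c : ℂ) (b : ℤ),
      ∑ p₁ ∈ Finset.Icc (-(k₁:ℤ)) (k₁:ℤ),
          c * ((cK (p₁, b) : ℂ) * (if (N:ℤ) ∣ p₁ - m₁ then 1 else 0))
        = (if m₁ ≤ k₁ then (1:ℂ) else 0) * (c * (cK ((m₁:ℤ), b) : ℂ))
          + (if N - m₁ ≤ k₁ then (1:ℂ) else 0) * (c * (cK ((m₁:ℤ) - N, b) : ℂ)) := by
    intro c b
    calc ∑ p₁ ∈ Finset.Icc (-(k₁:ℤ)) (k₁:ℤ),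
          c * ((cK (p₁, b) : ℂ) * (if (N:ℤ) ∣ p₁ - m₁ then 1 else 0))
        = ∑ p₁ ∈ Finset.Icc (-(k₁:ℤ)) (k₁:ℤ),
            (c * (cK (p₁, b) : ℂ)) * (if (N:ℤ) ∣ p₁ - m₁ then 1 else 0) := by
          exact Finset.sum_congr rfl fun p₁ _ => by ring
      _ = _ := key1 N k₁ m₁ hk₁ h₁ (fun p₁ => c * (cK (p₁, b) : ℂ))
  rw [step2, step2]
  ring

lemma count_le (M m : ℕ) :
    ∑ k ∈ Finset.range M, (if m ≤ k then (1:ℂ) else 0) = ((M - m : ℕ) : ℂ) := by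
  induction M with
  | zero => simp
  | succ n ih =>
    rw [Finset.sum_range_succ, ih]
    by_cases h : m ≤ n
    · simp only [h, if_true]
      push_cast [Nat.cast_sub h, Nat.cast_sub (by omega : m ≤ n + 1)]
      ring
    · simp only [h, if_false, add_zero]
      rw [Nat.sub_eq_zero_of_le (by omega), Nat.sub_eq_zero_of_le (by omega)]

lemma sumk (M : ℕ) (a b : ℕ) (x : ℂ) :
    ∑ k₁ ∈ Finset.range M, ∑ k₂ ∈ Finset.range M,
        (if a ≤ k₁ then (1:ℂ) else 0) * (if b ≤ k₂ then (1:ℂ) else 0) * x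
      = ((M - a : ℕ) : ℂ) * ((M - b : ℕ) : ℂ) * x := by
  calc ∑ k₁ ∈ Finset.range M, ∑ k₂ ∈ Finset.range M,
        (if a ≤ k₁ then (1:ℂ) else 0) * (if b ≤ k₂ then (1:ℂ) else 0) * x
      = ∑ k₁ ∈ Finset.range M, (if a ≤ k₁ then (1:ℂ) else 0)
          * ((∑ k₂ ∈ Finset.range M, (if b ≤ k₂ then (1:ℂ) else 0)) * x) := by
        refine Finset.sum_congr rfl fun k₁ _ => ?_
        rw [Finset.sum_mul, Finset.mul_sum]
        exact Finset.sum_congr rfl fun k₂ _ => mul_assoc _ _ _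
    _ = (∑ k₁ ∈ Finset.range M, (if a ≤ k₁ then (1:ℂ) else 0))
          * ((∑ k₂ ∈ Finset.range M, (if b ≤ k₂ then (1:ℂ) else 0)) * x) :=
        (Finset.sum_mul _ _ _).symm
    _ = _ := by rw [count_le, count_le, mul_assoc]

lemma sum_prod_split (N : ℕ) [NeZero N] (g h : ZMod N → ℂ) :
    ∑ n : ZMod N × ZMod N, g n.1 * h n.2 = (∑ a : ZMod N, g a) * (∑ b : ZMod N, h b) := by
  rw [Finset.sum_mul_sum, Fintype.sum_prod_type]

lemma pull2 {ι κ : Type*} (s : Finset ι) (t : ι → Finset κ) (f : ι → κ → ℂ) (c : ℂ) :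
    ∑ i ∈ s, ∑ j ∈ t i, c * f i j = c * ∑ i ∈ s, ∑ j ∈ t i, f i j := by
  rw [Finset.mul_sum]
  exact Finset.sum_congr rfl fun i _ => by rw [Finset.mul_sum]

lemma fejer_gen (M : ℕ) (hM : 1 ≤ M) (a : ℕ) (p : ℤ) (ha : |p| = a) :
    fejerWeight M p = ((M - a : ℕ) : ℝ) / M := by
  unfold fejerWeight
  have hM' : (0:ℝ) < M := by exact_mod_cast hM
  have : (|p| : ℝ) = (a : ℝ) := by exact_mod_cast congrArg (fun z : ℤ => (z : ℝ)) ha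
  rw [this]
  rcases le_or_gt a M with h | h
  · rw [max_eq_left]
    · rw [Nat.cast_sub h]; field_simp
    · rw [sub_nonneg, div_le_one hM']; exact_mod_cast h
  · rw [max_eq_right, Nat.sub_eq_zero_of_le h.le]
    · simp
    · rw [sub_nonpos, le_div_iff₀ hM', one_mul]; exact_mod_cast h.le

lemma fejer_eq (M : ℕ) (hM : 1 ≤ M) (m : ℕ) :
    fejerWeight M (m : ℤ) = ((M - m : ℕ) : ℝ) / M :=
  fejer_gen M hM m m (by simp)

lemma fejer_eq_neg (M N m : ℕ) (hM : 1 ≤ M) (hm : m < N) :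
    fejerWeight M ((m:ℤ) - N) = ((M - (N - m) : ℕ) : ℝ) / M :=
  fejer_gen M hM (N - m) _ (by rw [abs_of_nonpos (by omega)]; omega)

lemma cK_nonneg (p : ℤ × ℤ) : 0 ≤ cK p := by
  unfold cK
  apply div_nonneg <;> positivity

lemma cK_le_one (p : ℤ × ℤ) : cK p ≤ 1 := by
  unfold cK
  set a := (p.1 : ℝ) ^ 2 with ha
  set b := (p.2 : ℝ) ^ 2 with hb
  have ha' : 0 ≤ a := by positivity
  have hb' : 0 ≤ b := by positivity
  rcases eq_or_lt_of_le (by positivity : (0:ℝ) ≤ (a + b) ^ 2) with h | h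
  · rw [← h, div_zero]; norm_num
  · rw [div_le_one h]; nlinarith

/-- The DFT coefficients of the sampled Cesàro-regularized kernel `σ̄_M` on the
`N × N` grid (`N ≥ M`) equal the Cesàro-weighted aliased sum
`∑ w(p₁) w(p₂) c_{(p₁,p₂)}(𝒦)` over `p₁ ∈ {m₁, m₁−N}`, `p₂ ∈ {m₂, m₂−N}`;
in particular they are real, nonnegative, and at most `4`. -/
theorem stmt_10 (M N : ℕ) [NeZero N] (hM : 1 ≤ M) (hMN : M ≤ N)
    (m₁ m₂ : ℕ) (h₁ : m₁ < N) (h₂ : m₂ < N) :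
    ∃ r : ℝ,
      dft2 N (fun p => sigmaM M ((p.1.val : ℝ) / N, (p.2.val : ℝ) / N))
          ((m₁ : ZMod N), (m₂ : ZMod N)) = (r : ℂ) ∧
      r = fejerWeight M m₁ * fejerWeight M m₂ * cK (m₁, m₂)
        + fejerWeight M ((m₁ : ℤ) - N) * fejerWeight M m₂ * cK ((m₁ : ℤ) - N, m₂)
        + fejerWeight M m₁ * fejerWeight M ((m₂ : ℤ) - N) * cK (m₁, (m₂ : ℤ) - N)
        + fejerWeight M ((m₁ : ℤ) - N) * fejerWeight M ((m₂ : ℤ) - N) *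
            cK ((m₁ : ℤ) - N, (m₂ : ℤ) - N) ∧
      0 ≤ r ∧ r ≤ 4 := by
  have hNC : (N:ℂ) ≠ 0 := Nat.cast_ne_zero.mpr (NeZero.ne N)
  have hMC : (M:ℂ) ≠ 0 := Nat.cast_ne_zero.mpr (by omega)
  have hMR : (0:ℝ) < M := by exact_mod_cast hM
  have w : ∀ a : ℕ, (0:ℝ) ≤ ((M - a : ℕ):ℝ)/M := fun a => by positivity
  have wle : ∀ a : ℕ, ((M - a : ℕ):ℝ)/M ≤ 1 := fun a => by
    rw [div_le_one hMR]; exact_mod_cast Nat.sub_le M a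
  refine ⟨((M - m₁ : ℕ) : ℝ) / M * (((M - m₂ : ℕ) : ℝ) / M) * cK (m₁, m₂)
      + ((M - (N - m₁) : ℕ) : ℝ) / M * (((M - m₂ : ℕ) : ℝ) / M) * cK ((m₁:ℤ) - N, m₂)
      + ((M - m₁ : ℕ) : ℝ) / M * (((M - (N - m₂) : ℕ) : ℝ) / M) * cK (m₁, (m₂:ℤ) - N)
      + ((M - (N - m₁) : ℕ) : ℝ) / M * (((M - (N - m₂) : ℕ) : ℝ) / M) *
          cK ((m₁:ℤ) - N, (m₂:ℤ) - N), ?_, ?_, ?_, ?_⟩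
  · -- main DFT computation
    have hsummand : ∀ a b : ℕ, sigmaM M ((a : ℝ) / N, (b : ℝ) / N) *
        Complex.exp (-(2 * (π:ℂ) * Complex.I * ((m₁ * a + m₂ * b : ℕ) : ℂ)) / N)
      = (1 / (M:ℂ)^2) * ∑ k₁ ∈ Finset.range M, ∑ k₂ ∈ Finset.range M,
          ∑ p₁ ∈ Finset.Icc (-(k₁:ℤ)) (k₁:ℤ), ∑ p₂ ∈ Finset.Icc (-(k₂:ℤ)) (k₂:ℤ),
            (cK (p₁, p₂) : ℂ) *
              (Complex.exp (2 * π * Complex.I * ((p₁ - m₁ : ℤ) : ℂ) * (a:ℂ) / N) *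
               Complex.exp (2 * π * Complex.I * ((p₂ - m₂ : ℤ) : ℂ) * (b:ℂ) / N)) := by
      intro a b
      unfold sigmaM
      rw [mul_assoc]
      congr 1
      simp only [Finset.sum_mul]
      refine Finset.sum_congr rfl fun k₁ _ => Finset.sum_congr rfl fun k₂ _ =>
        Finset.sum_congr rfl fun p₁ _ => Finset.sum_congr rfl fun p₂ _ => ?_
      rw [mul_assoc, ← Complex.exp_add, ← Complex.exp_add]
      congr 1
      push_cast
      field_simp
      ring
    have hswap : ∀ (f : ℕ → ℕ → ℤ → ℤ → (ZMod N × ZMod N) → ℂ),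
        (∑ n : ZMod N × ZMod N, ∑ k₁ ∈ Finset.range M, ∑ k₂ ∈ Finset.range M,
          ∑ p₁ ∈ Finset.Icc (-(k₁:ℤ)) (k₁:ℤ), ∑ p₂ ∈ Finset.Icc (-(k₂:ℤ)) (k₂:ℤ),
            f k₁ k₂ p₁ p₂ n)
        = ∑ k₁ ∈ Finset.range M, ∑ k₂ ∈ Finset.range M,
            ∑ p₁ ∈ Finset.Icc (-(k₁:ℤ)) (k₁:ℤ), ∑ p₂ ∈ Finset.Icc (-(k₂:ℤ)) (k₂:ℤ),
              ∑ n : ZMod N × ZMod N, f k₁ k₂ p₁ p₂ n := by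
      intro f
      rw [Finset.sum_comm]
      refine Finset.sum_congr rfl fun k₁ _ => ?_
      rw [Finset.sum_comm]
      refine Finset.sum_congr rfl fun k₂ _ => ?_
      rw [Finset.sum_comm]
      refine Finset.sum_congr rfl fun p₁ _ => ?_
      rw [Finset.sum_comm]
    have hinner : ∀ (p₁ p₂ : ℤ),
        (∑ n : ZMod N × ZMod N, (cK (p₁, p₂) : ℂ) *
          (Complex.exp (2 * π * Complex.I * ((p₁ - m₁ : ℤ) : ℂ) * (n.1.val:ℂ) / N) *
           Complex.exp (2 * π * Complex.I * ((p₂ - m₂ : ℤ) : ℂ) * (n.2.val:ℂ) / N)))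
        = (N:ℂ)^2 * ((cK (p₁, p₂) : ℂ) * (if (N:ℤ) ∣ p₁ - m₁ then 1 else 0)
            * (if (N:ℤ) ∣ p₂ - m₂ then 1 else 0)) := by
      intro p₁ p₂
      rw [← Finset.mul_sum,
        sum_prod_split N
          (fun a : ZMod N => Complex.exp (2 * π * Complex.I * ((p₁ - m₁ : ℤ) : ℂ) * (a.val:ℂ) / N))
          (fun b : ZMod N => Complex.exp (2 * π * Complex.I * ((p₂ - m₂ : ℤ) : ℂ) * (b.val:ℂ) / N)),
        sum_zmod N (fun i : ℕ => Complex.exp (2 * π * Complex.I * ((p₁ - m₁ : ℤ) : ℂ) * (i:ℂ) / N)),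
        sum_zmod N (fun i : ℕ => Complex.exp (2 * π * Complex.I * ((p₂ - m₂ : ℤ) : ℂ) * (i:ℂ) / N)),
        sum_range_exp, sum_range_exp]
      split_ifs <;> ring
    simp only [dft2, ZMod.val_cast_of_lt h₁, ZMod.val_cast_of_lt h₂]
    rw [Finset.sum_congr rfl fun (n : ZMod N × ZMod N) _ => hsummand n.1.val n.2.val,
      ← Finset.mul_sum]
    rw [hswap (fun k₁ k₂ p₁ p₂ n => (cK (p₁, p₂) : ℂ) *
        (Complex.exp (2 * π * Complex.I * ((p₁ - m₁ : ℤ) : ℂ) * (n.1.val:ℂ) / N) *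
         Complex.exp (2 * π * Complex.I * ((p₂ - m₂ : ℤ) : ℂ) * (n.2.val:ℂ) / N)))]
    rw [Finset.sum_congr rfl fun k₁ _ => Finset.sum_congr rfl fun k₂ _ =>
      Finset.sum_congr rfl fun p₁ _ => Finset.sum_congr rfl fun p₂ _ => hinner p₁ p₂]
    rw [Finset.sum_congr rfl fun k₁ hk₁ => Finset.sum_congr rfl fun k₂ hk₂ =>
      (pull2 _ _ _ _).trans (congrArg _
        (key2 N k₁ k₂ m₁ m₂ (lt_of_lt_of_le (Finset.mem_range.mp hk₁) hMN)
          (lt_of_lt_of_le (Finset.mem_range.mp hk₂) hMN) h₁ h₂))]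
    rw [pull2]
    simp only [Finset.sum_add_distrib]
    rw [sumk, sumk, sumk, sumk]
    push_cast
    have hN2 : (N:ℂ)^2 ≠ 0 := pow_ne_zero _ hNC
    have hM2 : (M:ℂ)^2 ≠ 0 := pow_ne_zero _ hMC
    field_simp
  · rw [fejer_eq M hM m₁, fejer_eq M hM m₂, fejer_eq_neg M N m₁ hM h₁,
      fejer_eq_neg M N m₂ hM h₂]
  · have h4 : ∀ (a b : ℕ) (p : ℤ × ℤ), 0 ≤ ((M - a : ℕ):ℝ)/M * (((M - b : ℕ):ℝ)/M) * cK p :=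
      fun a b p => mul_nonneg (mul_nonneg (w a) (w b)) (cK_nonneg p)
    exact add_nonneg (add_nonneg (add_nonneg (h4 _ _ _) (h4 _ _ _)) (h4 _ _ _)) (h4 _ _ _)
  · have hterm : ∀ (a b : ℕ) (p : ℤ × ℤ),
        ((M - a : ℕ):ℝ)/M * (((M - b : ℕ):ℝ)/M) * cK p ≤ 1 := by
      intro a b p
      exact mul_le_one₀ (mul_le_one₀ (wle a) (w b) (wle b)) (cK_nonneg p) (cK_le_one p)
    linarith [hterm m₁ m₂ ((m₁:ℤ), (m₂:ℤ)), hterm (N-m₁) m₂ ((m₁:ℤ) - N, (m₂:ℤ)),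
      hterm m₁ (N-m₂) ((m₁:ℤ), (m₂:ℤ) - N), hterm (N-m₁) (N-m₂) ((m₁:ℤ) - N, (m₂:ℤ) - N)]
end
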